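/- Let R > 0, β ≥ 2, and let L be a random variable uniformly distributed on [−R, R]. Define U = (|L|/(2R − L))^β and V = (|L|/(2R + L))^β (both built from the same L), and let α² = E[U]. Then E[log(1 + 1/(U + V))] ≥ log(1 + 1/(2α²)). -/

import Mathlib

/-!
The map `t ↦ log (1 + 1/t)` is convex on `(0, ∞)`, so Jensen's inequality gives
`E[log (1 + 1/(U + V))] ≥ log (1 + 1/E[U + V])`, and `E[U + V] = 2 E[U]` because `L` and `-L`
have the same law and `V(L) = U(-L)`. Jensen is applied through the tangent line of
`log (1 + 1/t)` at `t = 2α²`, which only needs `U + V > 0` almost surely. The one analytic point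
is the integrability of `log (1 + 1/(U + V))`: it blows up at `L = 0`, but only like
`-β log |L|`, which is integrable.
-/

open MeasureTheory Real

/-- The uniform probability measure on the interval `[-R, R]`. -/
noncomputable def unif (R : ℝ) : Measure ℝ :=
  (ENNReal.ofReal (2 * R))⁻¹ • (volume.restrict (Set.Icc (-R) R))

open Set

lemma log_one_add_one_div_nonneg {t : ℝ} (ht : 0 ≤ t) : 0 ≤ log (1 + 1 / t) :=
  log_nonneg (by linarith [one_div_nonneg.2 ht])

/-- `-(c * (c + 1))⁻¹` is the derivative of `t ↦ log (1 + 1/t)` at `c`. -/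
lemma log_one_add_one_div_tangent_le {t c : ℝ} (ht : 0 < t) (hc : 0 < c) :
    log (1 + 1 / c) + -(c * (c + 1))⁻¹ * (t - c) ≤ log (1 + 1 / t) := by
  have hlog : 1 - (1 + 1 / c) / (1 + 1 / t) ≤ log (1 + 1 / t) - log (1 + 1 / c) := by
    have h := log_le_sub_one_of_pos (show 0 < (1 + 1 / c) / (1 + 1 / t) by positivity)
    rw [log_div (by positivity) (by positivity)] at h
    linarith
  have hgap : 1 - (1 + 1 / c) / (1 + 1 / t) - -(c * (c + 1))⁻¹ * (t - c)
      = (t - c) ^ 2 / (c * (c + 1) * (t + 1)) := by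
    field_simp
    ring
  have : 0 ≤ (t - c) ^ 2 / (c * (c + 1) * (t + 1)) := by positivity
  linarith

lemma log_one_add_one_div_le_log_two_sub_log {s t : ℝ} (hs : 0 < s) (hs1 : s ≤ 1)
    (hst : s ≤ t) : log (1 + 1 / t) ≤ log 2 - log s := by
  have ht : 0 < t := hs.trans_le hst
  calc log (1 + 1 / t) ≤ log (1 / s + 1 / s) :=
        log_le_log (by positivity)
          (add_le_add (one_le_one_div hs hs1) (one_div_le_one_div_of_le hs hst))
    _ = log 2 - log s := by rw [← two_mul, mul_one_div, log_div two_ne_zero hs.ne']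

lemma le_integral_comp_of_supporting_line {α : Type*} [MeasurableSpace α] {μ : Measure α}
    [IsProbabilityMeasure μ] {g : α → ℝ} {φ : ℝ → ℝ} (m : ℝ) (hg : Integrable g μ)
    (hφg : Integrable (fun x ↦ φ (g x)) μ)
    (hline : ∀ᵐ x ∂μ, φ (∫ y, g y ∂μ) + m * (g x - ∫ y, g y ∂μ) ≤ φ (g x)) :
    φ (∫ x, g x ∂μ) ≤ ∫ x, φ (g x) ∂μ := by
  have hdev : Integrable (fun x ↦ m * (g x - ∫ y, g y ∂μ)) μ :=
    (hg.sub (integrable_const _)).const_mul m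
  calc φ (∫ x, g x ∂μ) = ∫ x, (φ (∫ y, g y ∂μ) + m * (g x - ∫ y, g y ∂μ)) ∂μ := by
        rw [integral_add (integrable_const _) hdev,
          integral_const_mul, integral_sub hg (integrable_const _)]
        simp
    _ ≤ ∫ x, φ (g x) ∂μ := integral_mono_ae ((integrable_const _).add hdev) hφg hline

lemma integral_pos_of_ae_pos {α : Type*} [MeasurableSpace α] {μ : Measure α} [NeZero μ]
    {f : α → ℝ} (hfi : Integrable f μ) (hf : ∀ᵐ x ∂μ, 0 < f x) : 0 < ∫ x, f x ∂μ := by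
  rw [integral_pos_iff_support_of_nonneg_ae (hf.mono fun _ hx ↦ hx.le) hfi, pos_iff_ne_zero]
  intro hsupp
  obtain ⟨x, hx, hx0⟩ := (hf.and (measure_eq_zero_iff_ae_notMem.1 hsupp)).exists
  exact hx0 hx.ne'

section Uniform

lemma isProbabilityMeasure_unif {R : ℝ} (hR : 0 < R) : IsProbabilityMeasure (unif R) := by
  constructor
  rw [unif, Measure.smul_apply, Measure.restrict_apply MeasurableSet.univ, univ_inter,
    volume_Icc, smul_eq_mul, show R - -R = 2 * R by ring]
  exact ENNReal.inv_mul_cancel (ENNReal.ofReal_pos.2 (by linarith)).ne' ENNReal.ofReal_ne_top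

lemma ae_unif_mem_Icc_ne_zero (R : ℝ) : ∀ᵐ x ∂unif R, x ∈ Icc (-R) R ∧ x ≠ 0 := by
  refine Measure.ae_smul_measure ?_ _
  filter_upwards [ae_restrict_mem measurableSet_Icc,
    ae_restrict_of_ae (volume.ae_ne 0)] with x hx hx0
  exact ⟨hx, hx0⟩

lemma integral_unif_comp_neg (R : ℝ) (f : ℝ → ℝ) :
    ∫ x, f (-x) ∂unif R = ∫ x, f x ∂unif R := by
  have h := measurableEmbedding_neg.setIntegral_map (μ := volume) f (Icc (-R) R)
  rw [Measure.map_neg_eq_self, neg_preimage, neg_Icc, neg_neg] at h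
  simp only [unif, integral_smul_measure, h]

lemma integrable_log_unif {R : ℝ} (hR : 0 < R) : Integrable log (unif R) := by
  refine Integrable.smul_measure ?_ (ENNReal.inv_ne_top.2 (ENNReal.ofReal_pos.2 (by linarith)).ne')
  exact (intervalIntegrable_iff_integrableOn_Icc_of_le (by linarith)).1
    intervalIntegral.intervalIntegrable_log'

lemma integrable_unif_of_le {R : ℝ} {f g : ℝ → ℝ} (hf : Measurable f)
    (hg : Integrable g (unif R)) (hfg : ∀ x ∈ Icc (-R) R, x ≠ 0 → ‖f x‖ ≤ g x) :
    Integrable f (unif R) :=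
  hg.mono' hf.aestronglyMeasurable <|
    (ae_unif_mem_Icc_ne_zero R).mono fun x hx ↦ hfg x hx.1 hx.2

end Uniform

section InterferenceRatios

/-- `isrRight R β L` and `isrLeft R β L` are the paper's `U` and `V`: the interference-to-signal
ratios at `L` from the base stations at `2R` and at `-2R`. -/
noncomputable def isrRight (R β x : ℝ) : ℝ := (|x| / (2 * R - x)) ^ β

noncomputable def isrLeft (R β x : ℝ) : ℝ := (|x| / (2 * R + x)) ^ β

variable {R β x : ℝ}

lemma isrLeft_eq_isrRight_neg (x : ℝ) : isrLeft R β x = isrRight R β (-x) := by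
  rw [isrLeft, isrRight, abs_neg, sub_neg_eq_add]

lemma measurable_isrRight : Measurable (isrRight R β) := by
  unfold isrRight
  fun_prop

lemma measurable_isrLeft : Measurable (isrLeft R β) := by
  unfold isrLeft
  fun_prop

lemma neg_mem_Icc_neg (hx : x ∈ Icc (-R) R) : -x ∈ Icc (-R) R :=
  ⟨neg_le_neg hx.2, by linarith [hx.1]⟩

lemma abs_le_two_mul_sub (hx : x ∈ Icc (-R) R) : |x| ≤ 2 * R - x := by
  rcases abs_cases x with ⟨h, _⟩ | ⟨h, _⟩ <;> linarith [hx.1, hx.2]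

lemma two_mul_sub_pos (hx : x ∈ Icc (-R) R) (hx0 : x ≠ 0) : 0 < 2 * R - x :=
  (abs_pos.2 hx0).trans_le (abs_le_two_mul_sub hx)

lemma isrRight_pos (hx : x ∈ Icc (-R) R) (hx0 : x ≠ 0) : 0 < isrRight R β x :=
  rpow_pos_of_pos (div_pos (abs_pos.2 hx0) (two_mul_sub_pos hx hx0)) β

lemma isrLeft_pos (hx : x ∈ Icc (-R) R) (hx0 : x ≠ 0) : 0 < isrLeft R β x := by
  rw [isrLeft_eq_isrRight_neg]
  exact isrRight_pos (neg_mem_Icc_neg hx) (neg_ne_zero.2 hx0)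

lemma isrRight_le_one (hβ : 0 ≤ β) (hx : x ∈ Icc (-R) R) : isrRight R β x ≤ 1 :=
  rpow_le_one (div_nonneg (abs_nonneg x) ((abs_nonneg x).trans (abs_le_two_mul_sub hx)))
    (div_le_one_of_le₀ (abs_le_two_mul_sub hx) ((abs_nonneg x).trans (abs_le_two_mul_sub hx))) hβ

lemma isrLeft_le_one (hβ : 0 ≤ β) (hx : x ∈ Icc (-R) R) : isrLeft R β x ≤ 1 := by
  rw [isrLeft_eq_isrRight_neg]
  exact isrRight_le_one hβ (neg_mem_Icc_neg hx)

lemma rpow_abs_div_three_mul_le_isrRight (hβ : 0 ≤ β) (hx : x ∈ Icc (-R) R) (hx0 : x ≠ 0) :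
    (|x| / (3 * R)) ^ β ≤ isrRight R β x := by
  exact rpow_le_rpow (div_nonneg (abs_nonneg x) (by linarith [hx.1, hx.2]))
    (div_le_div_of_nonneg_left (abs_nonneg x) (two_mul_sub_pos hx hx0) (by linarith [hx.1])) hβ

lemma integral_isrLeft_unif : ∫ x, isrLeft R β x ∂unif R = ∫ x, isrRight R β x ∂unif R := by
  simp_rw [isrLeft_eq_isrRight_neg]
  exact integral_unif_comp_neg R _

lemma integrable_isrRight_unif (hR : 0 < R) (hβ : 0 ≤ β) : Integrable (isrRight R β) (unif R) :=
  have := isProbabilityMeasure_unif hR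
  integrable_unif_of_le measurable_isrRight (integrable_const 1) fun x hx hx0 ↦ by
    rw [norm_of_nonneg (isrRight_pos hx hx0).le]
    exact isrRight_le_one hβ hx

lemma integrable_isrLeft_unif (hR : 0 < R) (hβ : 0 ≤ β) : Integrable (isrLeft R β) (unif R) :=
  have := isProbabilityMeasure_unif hR
  integrable_unif_of_le measurable_isrLeft (integrable_const 1) fun x hx hx0 ↦ by
    rw [norm_of_nonneg (isrLeft_pos hx hx0).le]
    exact isrLeft_le_one hβ hx

lemma integral_isrRight_unif_pos (hR : 0 < R) (hβ : 0 ≤ β) :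
    0 < ∫ x, isrRight R β x ∂unif R :=
  have := isProbabilityMeasure_unif hR
  integral_pos_of_ae_pos (integrable_isrRight_unif hR hβ) <|
    (ae_unif_mem_Icc_ne_zero R).mono fun _ hx ↦ isrRight_pos hx.1 hx.2

lemma log_one_add_one_div_isr_le (hR : 0 < R) (hβ : 0 ≤ β) (hx : x ∈ Icc (-R) R)
    (hx0 : x ≠ 0) :
    log (1 + 1 / (isrRight R β x + isrLeft R β x)) ≤ log 2 + β * log (3 * R) - β * log x := by
  have hs : 0 < (|x| / (3 * R)) ^ β := rpow_pos_of_pos (by positivity) β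
  have hs1 : (|x| / (3 * R)) ^ β ≤ 1 :=
    rpow_le_one (by positivity) (div_le_one_of_le₀ (by linarith [abs_le.2 hx]) (by positivity)) hβ
  have hst : (|x| / (3 * R)) ^ β ≤ isrRight R β x + isrLeft R β x := by
    linarith [rpow_abs_div_three_mul_le_isrRight hβ hx hx0, (isrLeft_pos hx hx0 (β := β)).le]
  have hlog : log ((|x| / (3 * R)) ^ β) = β * (log x - log (3 * R)) := by
    rw [log_rpow (by positivity), log_div (abs_pos.2 hx0).ne' (by positivity), log_abs]
  linarith [log_one_add_one_div_le_log_two_sub_log hs hs1 hst]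

lemma integrable_log_one_add_one_div_isr_unif (hR : 0 < R) (hβ : 0 ≤ β) :
    Integrable (fun x ↦ log (1 + 1 / (isrRight R β x + isrLeft R β x))) (unif R) := by
  have := isProbabilityMeasure_unif hR
  refine integrable_unif_of_le (g := fun x ↦ log 2 + β * log (3 * R) - β * log x)
    (by unfold isrRight isrLeft; fun_prop)
    ((integrable_const _).sub ((integrable_log_unif hR).const_mul β)) fun x hx hx0 ↦ ?_
  rw [norm_of_nonneg (log_one_add_one_div_nonneg
    ((isrRight_pos hx hx0).le.trans (le_add_of_nonneg_right (isrLeft_pos hx hx0).le)))]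
  exact log_one_add_one_div_isr_le hR hβ hx hx0

end InterferenceRatios

/-- Downlink SCP with equal transmit power per user: for `L ~ Uniform[-R,R]`,
`U = (|L|/(2R-L))^β`, `V = (|L|/(2R+L))^β` (built from the same `L`), and `α² = E[U]`,
`E[log(1 + 1/(U+V))] ≥ log(1 + 1/(2α²))`. -/
theorem stmt_14 (R β : ℝ) (hR : 0 < R) (hβ : 2 ≤ β) :
    let α2 : ℝ := ∫ x, (|x| / (2 * R - x)) ^ β ∂ unif R
    (∫ x, Real.log (1 + 1 / ((|x| / (2 * R - x)) ^ β + (|x| / (2 * R + x)) ^ β)) ∂ unif R) ≥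
      Real.log (1 + 1 / (2 * α2)) := by
  intro α2
  change log (1 + 1 / (2 * α2)) ≤ ∫ x, log (1 + 1 / (isrRight R β x + isrLeft R β x)) ∂unif R
  have := isProbabilityMeasure_unif hR
  have hβ0 : 0 ≤ β := by linarith
  have hα2 : 0 < α2 := integral_isrRight_unif_pos hR hβ0
  have hmean : ∫ x, (isrRight R β x + isrLeft R β x) ∂unif R = 2 * α2 := by
    rw [integral_add (integrable_isrRight_unif hR hβ0) (integrable_isrLeft_unif hR hβ0),
      integral_isrLeft_unif, two_mul]
    rfl
  rw [← hmean]
  refine le_integral_comp_of_supporting_line (φ := fun t ↦ log (1 + 1 / t))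
    (-(2 * α2 * (2 * α2 + 1))⁻¹) ((integrable_isrRight_unif hR hβ0).add
      (integrable_isrLeft_unif hR hβ0)) (integrable_log_one_add_one_div_isr_unif hR hβ0) ?_
  rw [hmean]
  filter_upwards [ae_unif_mem_Icc_ne_zero R] with x ⟨hx, hx0⟩
  exact log_one_add_one_div_tangent_le
    (add_pos (isrRight_pos hx hx0) (isrLeft_pos hx hx0)) (by positivity)
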